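/- arXiv:1512.08370 — 5 statements merged into one kernel-verified Lean document; each statement's English description precedes it below -/
import Mathlib

section
/- Let (a(t))_{t≥−1} be a sequence of real m-vectors, and define Q : ℕ → ℝᵐ by Q_k(0) = max{0, −a_k(−1)} and Q_k(t+1) = max{−a_k(t), Q_k(t) + a_k(t)} for all k and t ≥ 0. Then for every t ≥ 1, ‖Q(t)‖² ≥ ‖a(t−1)‖², where ‖·‖ is the Euclidean norm on ℝᵐ. -/
/-! Coordinatewise, `max (-x) (q + x) ≥ max (-x) x = |x|` as soon as the previous queue value `q`
is nonnegative, and the queues stay nonnegative because they start at `max 0 _`. Hence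
`|a_k(t-1)| ≤ Q_k(t)` for every coordinate, and the Euclidean norm is monotone in the absolute
values of the coordinates. -/

theorem abs_le_max_neg_add {α : Type*} [AddCommGroup α] [LinearOrder α] [IsOrderedAddMonoid α]
    {q : α} (hq : 0 ≤ q) (x : α) : |x| ≤ max (-x) (q + x) := by
  rw [abs_eq_max_neg, max_comm]
  exact max_le_max le_rfl (le_add_of_nonneg_left hq)

theorem EuclideanSpace.norm_le_norm_of_forall_norm_le {𝕜 ι : Type*} [RCLike 𝕜] [Fintype ι]
    {x y : EuclideanSpace 𝕜 ι} (h : ∀ i, ‖x i‖ ≤ ‖y i‖) : ‖x‖ ≤ ‖y‖ := by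
  rw [EuclideanSpace.norm_eq, EuclideanSpace.norm_eq]
  gcongr with i
  exact h i

section VirtualQueue

variable {ι : Type*} {a : ℤ → EuclideanSpace ℝ ι} {Q : ℕ → EuclideanSpace ℝ ι}

theorem virtualQueue_nonneg (hQ0 : ∀ k, Q 0 k = max 0 (-(a (-1) k)))
    (hQrec : ∀ (t : ℕ) k, Q (t + 1) k = max (-(a t k)) (Q t k + a t k)) (t : ℕ) (k : ι) :
    0 ≤ Q t k := by
  induction t with
  | zero => exact hQ0 k ▸ le_max_left _ _
  | succ t ih => exact (abs_nonneg _).trans (hQrec t k ▸ abs_le_max_neg_add ih _)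

theorem abs_le_virtualQueue_succ (hQ0 : ∀ k, Q 0 k = max 0 (-(a (-1) k)))
    (hQrec : ∀ (t : ℕ) k, Q (t + 1) k = max (-(a t k)) (Q t k + a t k)) (t : ℕ) (k : ι) :
    |a t k| ≤ Q (t + 1) k :=
  hQrec t k ▸ abs_le_max_neg_add (virtualQueue_nonneg hQ0 hQrec t k) _

end VirtualQueue

/-- For the virtual queue update of Algorithm 1,
`Q_k(0) = max{0, −a_k(−1)}` and `Q_k(t+1) = max{−a_k(t), Q_k(t) + a_k(t)}`,
we have `‖Q(t)‖² ≥ ‖a(t−1)‖²` for all `t ≥ 1` (Euclidean norms). -/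
theorem virtual_queue_norm_ge {m : ℕ}
    (a : ℤ → EuclideanSpace ℝ (Fin m))
    (Q : ℕ → EuclideanSpace ℝ (Fin m))
    (hQ0 : ∀ k : Fin m, Q 0 k = max 0 (-(a (-1) k)))
    (hQrec : ∀ (t : ℕ) (k : Fin m),
      Q (t + 1) k = max (-(a t k)) (Q t k + a t k)) :
    ∀ t : ℕ, 1 ≤ t → ‖a ((t : ℤ) - 1)‖ ^ 2 ≤ ‖Q t‖ ^ 2 := by
  intro t ht
  obtain ⟨s, rfl⟩ := Nat.exists_eq_add_of_le' ht
  have hs : ((s + 1 : ℕ) : ℤ) - 1 = s := by push_cast; ring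
  rw [hs]
  gcongr
  refine EuclideanSpace.norm_le_norm_of_forall_norm_le fun k => ?_
  rw [Real.norm_eq_abs, Real.norm_eq_abs, abs_of_nonneg (virtualQueue_nonneg hQ0 hQrec _ k)]
  exact abs_le_virtualQueue_succ hQ0 hQrec s k
end

section
/- Let Q ∈ ℝᵐ with Q_k ≥ 0 for all k, let v ∈ ℝᵐ, and define Q' ∈ ℝᵐ by Q'_k = max{−v_k, Q_k + v_k} for each k ∈ {1,…,m}. Then (1/2)‖Q'‖² − (1/2)‖Q‖² ≤ ⟨Q, v⟩ + ‖v‖², where ‖·‖ and ⟨·,·⟩ are the Euclidean norm and inner product on ℝᵐ. -/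
/-!
Coordinatewise `max (-v_k) (Q_k + v_k) ^ 2 ≤ v_k ^ 2 + (Q_k + v_k) ^ 2`, so
`‖Q'‖² ≤ ‖v‖² + ‖Q + v‖² = ‖Q‖² + 2⟪Q, v⟫ + 2‖v‖²`.
-/

open scoped RealInnerProductSpace

theorem sq_max_le_sq_add_sq (a b : ℝ) : max a b ^ 2 ≤ a ^ 2 + b ^ 2 := by
  rcases max_choice a b with h | h <;> rw [h] <;> linarith [sq_nonneg a, sq_nonneg b]

theorem EuclideanSpace.norm_sq_le_of_apply_eq_max {ι : Type*} [Fintype ι]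
    {x y z : EuclideanSpace ℝ ι} (hz : ∀ i, z i = max (x i) (y i)) :
    ‖z‖ ^ 2 ≤ ‖x‖ ^ 2 + ‖y‖ ^ 2 := by
  simp only [EuclideanSpace.real_norm_sq_eq, hz, ← Finset.sum_add_distrib]
  exact Finset.sum_le_sum fun i _ => sq_max_le_sq_add_sq (x i) (y i)

theorem drift_bound_general {m : ℕ}
    (Q v Q' : EuclideanSpace ℝ (Fin m))
    (hQ' : ∀ k : Fin m, Q' k = max (-(v k)) (Q k + v k)) :
    (1 / 2) * ‖Q'‖ ^ 2 - (1 / 2) * ‖Q‖ ^ 2 ≤ ⟪Q, v⟫ + ‖v‖ ^ 2 := by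
  have hQ'_le : ‖Q'‖ ^ 2 ≤ ‖-v‖ ^ 2 + ‖Q + v‖ ^ 2 :=
    EuclideanSpace.norm_sq_le_of_apply_eq_max (by simpa using hQ')
  rw [norm_neg, norm_add_sq_real] at hQ'_le
  linarith

/-- Lyapunov drift bound for Algorithm 1's virtual queue update: if `Q ∈ ℝᵐ`
is componentwise nonnegative and `Q'_k = max{−v_k, Q_k + v_k}`, then
`(1/2)‖Q'‖² − (1/2)‖Q‖² ≤ ⟨Q, v⟩ + ‖v‖²` (Euclidean norm and inner product). -/
theorem drift_bound {m : ℕ}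
    (Q v Q' : EuclideanSpace ℝ (Fin m))
    (hQ : ∀ k : Fin m, 0 ≤ Q k)
    (hQ' : ∀ k : Fin m, Q' k = max (-(v k)) (Q k + v k)) :
    (1 / 2) * ‖Q'‖ ^ 2 - (1 / 2) * ‖Q‖ ^ 2 ≤ ⟪Q, v⟫ + ‖v‖ ^ 2 :=
  drift_bound_general Q v Q' hQ'
end

section
/- Let 𝒳 ⊆ ℝⁿ be a convex set, let f : ℝⁿ → ℝ be convex on 𝒳, let g = (g₁,…,g_m) : ℝⁿ → ℝᵐ have each component g_k convex on 𝒳 and satisfy ‖g(u) − g(v)‖ ≤ β‖u − v‖ for all u, v ∈ 𝒳, and let α ≥ β²/2. Suppose: x_prev ∈ 𝒳; Q ∈ ℝᵐ satisfies Q_k + g_k(x_prev) ≥ 0 for all k; x_new ∈ 𝒳 minimizes x ↦ f(x) + ⟨Q + g(x_prev), g(x)⟩ + α‖x − x_prev‖² over 𝒳; Q' ∈ ℝᵐ is given by Q'_k = max{−g_k(x_new), Q_k + g_k(x_new)}; and x* ∈ 𝒳 satisfies g_k(x*) ≤ 0 for all k. Then (1/2)‖Q'‖² − (1/2)‖Q‖²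 + f(x_new) ≤ f(x*) + α(‖x* − x_prev‖² − ‖x* − x_new‖²) + (1/2)(‖g(x_new)‖² − ‖g(x_prev)‖²). -/
/-!
The objective minimised by `x(t)` is `f + ⟪Q + g(x(t-1)), g⟫` (convex, since the weights
`Q_k + g_k(x(t-1))` are nonnegative) plus the proximal term `α‖x - x(t-1)‖²`, so it is
`2α`-strongly convex, and comparing its minimiser with `x*` gains `α‖x* - x(t)‖²`.
Componentwise `Q_k(t+1)² ≤ g_k(x(t))² + (Q_k(t) + g_k(x(t)))²` bounds the drift by
`‖g(x(t))‖² + ⟪Q(t), g(x(t))⟫`, feasibility of `x*` makes `⟪Q + g(x(t-1)), g(x*)⟫ ≤ 0`, and the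
leftover cross term is `½‖g(x(t)) - g(x(t-1))‖² ≤ (β²/2)‖x(t) - x(t-1)‖²`, which the proximal
term absorbs because `α ≥ β²/2`.
-/

open scoped RealInnerProductSpace
open Filter Set Topology

section StrongConvexity

variable {E : Type*} [NormedAddCommGroup E] [NormedSpace ℝ E] {s : Set E}

lemma ConvexOn.add_strongConvexOn {f g : E → ℝ} {m : ℝ} (hf : ConvexOn ℝ s f)
    (hg : StrongConvexOn s m g) : StrongConvexOn s m (f + g) :=
  ((uniformConvexOn_zero.2 hf).add hg).mono fun r => by simp

lemma StrongConvexOn.add_mul_norm_sub_sq_le_of_isMinOn {f : E → ℝ} {m : ℝ} {x y : E}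
    (hf : StrongConvexOn s m f) (hmin : IsMinOn f s x) (hx : x ∈ s) (hy : y ∈ s) :
    f x + m / 2 * ‖y - x‖ ^ 2 ≤ f y := by
  have hsmall : ∀ t ∈ Ioo (0 : ℝ) 1,
      f x + m / 2 * ‖y - x‖ ^ 2 - f y ≤ t * (m / 2 * ‖y - x‖ ^ 2) := by
    rintro t ⟨ht0, ht1⟩
    have hz := hf.2 hx hy (sub_nonneg.2 ht1.le) ht0.le (sub_add_cancel 1 t)
    have hle := isMinOn_iff.1 hmin _ (hf.1 hx hy (sub_nonneg.2 ht1.le) ht0.le (sub_add_cancel 1 t))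
    rw [norm_sub_rev] at hz
    simp only [smul_eq_mul] at hz
    nlinarith
  have hlim : Tendsto (fun t : ℝ => t * (m / 2 * ‖y - x‖ ^ 2)) (𝓝[>] 0)
      (𝓝 (0 * (m / 2 * ‖y - x‖ ^ 2))) :=
    (tendsto_nhdsWithin_of_tendsto_nhds tendsto_id).mul_const _
  have := ge_of_tendsto hlim (Filter.mem_of_superset (Ioo_mem_nhdsGT one_pos) hsmall)
  linarith

end StrongConvexity

lemma strongConvexOn_mul_norm_sub_sq {E : Type*} [NormedAddCommGroup E] [InnerProductSpace ℝ E]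
    {s : Set E} (hs : Convex ℝ s) (α : ℝ) (p : E) :
    StrongConvexOn s (2 * α) fun x => α * ‖x - p‖ ^ 2 := by
  refine ⟨hs, fun x _ y _ a b ha hb hab => ?_⟩
  obtain rfl : b = 1 - a := eq_sub_of_add_eq' hab
  have hnorm_comb : ∀ u v : E, ‖a • u + (1 - a) • v‖ ^ 2 =
      a * ‖u‖ ^ 2 + (1 - a) * ‖v‖ ^ 2 - a * (1 - a) * ‖u - v‖ ^ 2 := fun u v => by
    rw [norm_add_sq_real, norm_sub_sq_real, norm_smul, norm_smul, real_inner_smul_left,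
      real_inner_smul_right, Real.norm_of_nonneg ha, Real.norm_of_nonneg hb]
    ring
  have hcomb : a • x + (1 - a) • y - p = a • (x - p) + (1 - a) • (y - p) := by module
  have hdiff : x - y = (x - p) - (y - p) := by abel
  simp only [smul_eq_mul]
  rw [hcomb, hdiff, hnorm_comb]
  linarith

namespace EuclideanSpace

variable {ι : Type*} [Fintype ι]

lemma norm_sq_le_add_of_forall_eq_max {v a b : EuclideanSpace ℝ ι}
    (h : ∀ k, v k = max (a k) (b k)) : ‖v‖ ^ 2 ≤ ‖a‖ ^ 2 + ‖b‖ ^ 2 := by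
  simp only [real_norm_sq_eq, ← Finset.sum_add_distrib]
  refine Finset.sum_le_sum fun k _ => ?_
  rw [h k]
  rcases max_cases (a k) (b k) with ⟨hk, _⟩ | ⟨hk, _⟩ <;> rw [hk] <;>
    linarith [sq_nonneg (a k), sq_nonneg (b k)]

lemma inner_nonpos_of_nonneg_of_nonpos {c v : EuclideanSpace ℝ ι} (hc : ∀ k, 0 ≤ c k)
    (hv : ∀ k, v k ≤ 0) : ⟪c, v⟫ ≤ 0 := by
  rw [PiLp.inner_apply]
  exact Finset.sum_nonpos fun k _ => mul_nonpos_of_nonpos_of_nonneg (hv k) (hc k)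

lemma convexOn_inner_of_nonneg {E : Type*} [AddCommGroup E] [Module ℝ E] {s : Set E}
    (hs : Convex ℝ s) {c : EuclideanSpace ℝ ι} (hc : ∀ k, 0 ≤ c k)
    {g : E → EuclideanSpace ℝ ι} (hg : ∀ k, ConvexOn ℝ s fun x => g x k) :
    ConvexOn ℝ s fun x => ⟪c, g x⟫ := by
  have hsum : (fun x => ⟪c, g x⟫) = ∑ k, fun x => c k • g x k := by
    ext x
    simp [PiLp.inner_apply, mul_comm]
  rw [hsum]
  exact Finset.sum_induction _ (ConvexOn ℝ s) (fun _ _ => ConvexOn.add) (convexOn_const 0 hs)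
    fun k _ => (hg k).smul (hc k)

end EuclideanSpace

/-- Drift-plus-penalty bound for one iteration of Algorithm 1 (Lemma 7 of the
paper): under the stated conditions,
`(1/2)‖Q'‖² − (1/2)‖Q‖² + f(x_new)
  ≤ f(x*) + α(‖x* − x_prev‖² − ‖x* − x_new‖²) + (1/2)(‖g(x_new)‖² − ‖g(x_prev)‖²)`. -/
theorem drift_plus_penalty_bound {n m : ℕ}
    (X : Set (EuclideanSpace ℝ (Fin n))) (hXconv : Convex ℝ X)
    (f : EuclideanSpace ℝ (Fin n) → ℝ) (hf : ConvexOn ℝ X f)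
    (g : EuclideanSpace ℝ (Fin n) → EuclideanSpace ℝ (Fin m))
    (hg : ∀ k : Fin m, ConvexOn ℝ X (fun x => g x k))
    (β : ℝ) (hLip : ∀ u ∈ X, ∀ v ∈ X, ‖g u - g v‖ ≤ β * ‖u - v‖)
    (α : ℝ) (hα : β ^ 2 / 2 ≤ α)
    (xprev : EuclideanSpace ℝ (Fin n)) (hxprev : xprev ∈ X)
    (Q : EuclideanSpace ℝ (Fin m)) (hQ : ∀ k : Fin m, 0 ≤ Q k + g xprev k)
    (xnew : EuclideanSpace ℝ (Fin n)) (hxnew : xnew ∈ X)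
    (hmin : ∀ x ∈ X,
      f xnew + ⟪Q + g xprev, g xnew⟫ + α * ‖xnew - xprev‖ ^ 2 ≤
        f x + ⟪Q + g xprev, g x⟫ + α * ‖x - xprev‖ ^ 2)
    (Q' : EuclideanSpace ℝ (Fin m))
    (hQ' : ∀ k : Fin m, Q' k = max (-(g xnew k)) (Q k + g xnew k))
    (xs : EuclideanSpace ℝ (Fin n)) (hxs : xs ∈ X)
    (hfeas : ∀ k : Fin m, g xs k ≤ 0) :
    (1 / 2) * ‖Q'‖ ^ 2 - (1 / 2) * ‖Q‖ ^ 2 + f xnew ≤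
      f xs + α * (‖xs - xprev‖ ^ 2 - ‖xs - xnew‖ ^ 2) +
        (1 / 2) * (‖g xnew‖ ^ 2 - ‖g xprev‖ ^ 2) := by
  have hweights : ∀ k, 0 ≤ (Q + g xprev) k := hQ
  have hstrong : StrongConvexOn X (2 * α)
      fun x => f x + ⟪Q + g xprev, g x⟫ + α * ‖x - xprev‖ ^ 2 :=
    (hf.add (EuclideanSpace.convexOn_inner_of_nonneg hXconv hweights hg)).add_strongConvexOn
      (strongConvexOn_mul_norm_sub_sq hXconv α xprev)
  have hprox := hstrong.add_mul_norm_sub_sq_le_of_isMinOn (isMinOn_iff.2 hmin) hxnew hxs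
  have hdrift : ‖Q'‖ ^ 2 ≤ ‖-g xnew‖ ^ 2 + ‖Q + g xnew‖ ^ 2 :=
    EuclideanSpace.norm_sq_le_add_of_forall_eq_max hQ'
  have hxs_gap : ⟪Q + g xprev, g xs⟫ ≤ 0 :=
    EuclideanSpace.inner_nonpos_of_nonneg_of_nonpos hweights hfeas
  have hstep : ‖g xnew - g xprev‖ ^ 2 ≤ 2 * α * ‖xnew - xprev‖ ^ 2 := by
    have hlip := hLip xnew hxnew xprev hxprev
    have hsq : ‖g xnew - g xprev‖ ^ 2 ≤ β ^ 2 * ‖xnew - xprev‖ ^ 2 := by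
      rw [← mul_pow]
      exact pow_le_pow_left₀ (norm_nonneg _) hlip 2
    exact hsq.trans (mul_le_mul_of_nonneg_right (by linarith) (sq_nonneg _))
  rw [norm_neg, norm_add_sq_real] at hdrift
  rw [norm_sub_sq_real, real_inner_comm] at hstep
  rw [inner_add_left] at hprox
  linarith
end

section
/- Consider Algorithm 1 applied to the convex program min{f(x) : g_k(x) ≤ 0 ∀k ∈ {1,…,m}, x ∈ 𝒳} with parameter α ≥ β²/2, where β is the Lipschitz modulus of g on 𝒳, and let x* ∈ 𝒳 be an optimal solution of the program. Then for all t ≥ 1, ∑_{τ=0}^{t−1} f(x(τ)) ≤ t·f(x*) + α‖x* − x(−1)‖². -/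
/-!
Each `x(t)` minimises over `𝒳` the `2α`-strongly convex function
`f + ⟪Q(t) + g(x(t-1)), g ·⟫ + α‖· - x(t-1)‖²` (the multiplier `Q(t) + g(x(t-1))` is
nonnegative), so comparing with `x*` gains `α‖x* - x(t)‖²`. Together with the queue drift
`‖Q(t+1)‖² ≤ ‖Q(t)‖² + 2⟪Q(t) + g(x(t)), g(x(t))⟫`, feasibility of `x*`, and `β²/2 ≤ α` absorbing
the error `‖g(x(t)) - g(x(t-1))‖²`, this yields `f(x(t)) ≤ f(x*) + F(t) - F(t+1)` for
`F(t) = ‖Q(t)‖²/2 + α‖x* - x(t-1)‖² - ‖g(x(t-1))‖²/2`. Telescope, using `F(0) ≤ α‖x* - x(-1)‖²`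
and `F(t) ≥ 0` for `t ≥ 1` (as `|g_k(x(t-1))| ≤ Q_k(t)`).
-/

open scoped RealInnerProductSpace

open Filter Topology Set in
theorem StrongConvexOn.add_norm_sub_sq_le_of_isMinOn {E : Type*} [NormedAddCommGroup E]
    [NormedSpace ℝ E] {s : Set E} {m : ℝ} {h : E → ℝ} {x z : E} (hh : StrongConvexOn s m h)
    (hmin : IsMinOn h s x) (hx : x ∈ s) (hz : z ∈ s) :
    h x + m / 2 * ‖z - x‖ ^ 2 ≤ h z := by
  have hseg : ∀ l ∈ Ioo (0 : ℝ) 1, h x + m / 2 * (1 - l) * ‖x - z‖ ^ 2 ≤ h z := by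
    rintro l ⟨hl0, hl1⟩
    have hconv := hh.2 hx hz (sub_nonneg.2 hl1.le) hl0.le (sub_add_cancel 1 l)
    have hle : h x ≤ h ((1 - l) • x + l • z) :=
      hmin (hh.1 hx hz (sub_nonneg.2 hl1.le) hl0.le (sub_add_cancel 1 l))
    simp only [smul_eq_mul] at hconv
    refine le_of_mul_le_mul_left ?_ hl0
    linarith
  have hlim : Tendsto (fun l : ℝ ↦ h x + m / 2 * (1 - l) * ‖x - z‖ ^ 2) (𝓝[>] 0)
      (𝓝 (h x + m / 2 * ‖x - z‖ ^ 2)) := by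
    refine tendsto_nhdsWithin_of_tendsto_nhds ?_
    simpa using (Continuous.tendsto (by fun_prop) (0 : ℝ) :
      Tendsto (fun l : ℝ ↦ h x + m / 2 * (1 - l) * ‖x - z‖ ^ 2) (𝓝 0) _)
  rw [norm_sub_rev]
  exact le_of_tendsto hlim (eventually_of_mem (Ioo_mem_nhdsGT one_pos) hseg)

theorem ConvexOn.strongConvexOn_add_mul_norm_sub_sq {E : Type*} [NormedAddCommGroup E]
    [InnerProductSpace ℝ E] {s : Set E} {φ : E → ℝ} (hφ : ConvexOn ℝ s φ) (α : ℝ) (y : E) :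
    StrongConvexOn s (2 * α) fun z ↦ φ z + α * ‖z - y‖ ^ 2 := by
  rw [strongConvexOn_iff_convex]
  have hlin : ConvexOn ℝ s fun z ↦ (-(2 * α) • innerₗ E y) z + α * ‖y‖ ^ 2 :=
    ((-(2 * α) • innerₗ E y).convexOn hφ.1).add_const _
  refine (hφ.add hlin).congr fun z _ ↦ ?_
  simp only [Pi.add_apply, LinearMap.smul_apply, innerₗ_apply_apply, smul_eq_mul,
    norm_sub_sq_real, real_inner_comm]
  ring

section Queue

variable {ι : Type*}

theorem EuclideanSpace.norm_le_norm_of_abs_le [Fintype ι] {a b : EuclideanSpace ℝ ι}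
    (h : ∀ k, |a k| ≤ |b k|) : ‖a‖ ≤ ‖b‖ := by
  rw [← sq_le_sq₀ (norm_nonneg a) (norm_nonneg b), EuclideanSpace.real_norm_sq_eq,
    EuclideanSpace.real_norm_sq_eq]
  exact Finset.sum_le_sum fun k _ ↦ sq_le_sq.2 (h k)

theorem EuclideanSpace.real_inner_eq_sum [Fintype ι] (a b : EuclideanSpace ℝ ι) :
    ⟪a, b⟫ = ∑ k, a k * b k := by
  simp [PiLp.inner_apply, mul_comm]

theorem convexOn_inner_of_nonneg [Fintype ι] {E : Type*} [AddCommGroup E] [Module ℝ E]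
    {s : Set E} (hs : Convex ℝ s) {g : E → EuclideanSpace ℝ ι}
    (hg : ∀ k, ConvexOn ℝ s fun z ↦ g z k) {c : EuclideanSpace ℝ ι} (hc : ∀ k, 0 ≤ c k) :
    ConvexOn ℝ s fun z ↦ ⟪c, g z⟫ := by
  refine ⟨hs, fun u hu v hv a b ha hb hab ↦ ?_⟩
  simp only [EuclideanSpace.real_inner_eq_sum, smul_eq_mul, Finset.mul_sum,
    ← Finset.sum_add_distrib]
  refine Finset.sum_le_sum fun k _ ↦ ?_
  have := mul_le_mul_of_nonneg_left ((hg k).2 hu hv ha hb hab) (hc k)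
  simp only [smul_eq_mul] at this
  linarith

variable {q q' a : EuclideanSpace ℝ ι}

theorem norm_sq_le_of_queue_update [Fintype ι] (hq' : ∀ k, q' k = max (-a k) (q k + a k)) :
    ‖q'‖ ^ 2 ≤ ‖q‖ ^ 2 + 2 * ⟪q + a, a⟫ := by
  simp only [EuclideanSpace.real_norm_sq_eq, EuclideanSpace.real_inner_eq_sum, Finset.mul_sum,
    ← Finset.sum_add_distrib]
  refine Finset.sum_le_sum fun k _ ↦ ?_
  rw [hq' k, PiLp.add_apply]
  rcases max_cases (-a k) (q k + a k) with ⟨h, _⟩ | ⟨h, _⟩ <;> rw [h] <;>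
    nlinarith [sq_nonneg (q k + a k), sq_nonneg (a k)]

theorem abs_le_of_queue_update (hq : ∀ k, 0 ≤ q k) (hq' : ∀ k, q' k = max (-a k) (q k + a k))
    (k : ι) : |a k| ≤ q' k := by
  rw [hq' k, abs_le']
  exact ⟨le_max_of_le_right (by linarith [hq k]), le_max_left _ _⟩

theorem norm_le_norm_of_queue_update [Fintype ι] (hq : ∀ k, 0 ≤ q k)
    (hq' : ∀ k, q' k = max (-a k) (q k + a k)) : ‖a‖ ≤ ‖q'‖ :=
  EuclideanSpace.norm_le_norm_of_abs_le fun k ↦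
    (abs_le_of_queue_update hq hq' k).trans (le_abs_self _)

theorem norm_le_norm_of_eq_max_zero_neg [Fintype ι] (hq : ∀ k, q k = max 0 (-a k)) :
    ‖q‖ ≤ ‖a‖ :=
  EuclideanSpace.norm_le_norm_of_abs_le fun k ↦ by
    rw [hq k, abs_of_nonneg (le_max_left _ _)]
    exact max_le (abs_nonneg _) (neg_le_abs _)

end Queue

theorem drift_plus_penalty_step {E ι : Type*} [NormedAddCommGroup E] [InnerProductSpace ℝ E]
    [Fintype ι] {X : Set E} {f : E → ℝ} {g : E → EuclideanSpace ℝ ι} {α β : ℝ}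
    {q q' : EuclideanSpace ℝ ι} {y x xs : E} (hf : ConvexOn ℝ X f)
    (hg : ∀ k, ConvexOn ℝ X fun z ↦ g z k) (hLip : ‖g x - g y‖ ≤ β * ‖x - y‖)
    (hα : β ^ 2 / 2 ≤ α) (hc : ∀ k, 0 ≤ q k + g y k)
    (hmin : IsMinOn (fun z ↦ f z + ⟪q + g y, g z⟫ + α * ‖z - y‖ ^ 2) X x) (hx : x ∈ X)
    (hxs : xs ∈ X) (hfeas : ∀ k, g xs k ≤ 0) (hq' : ∀ k, q' k = max (-g x k) (q k + g x k)) :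
    f x + (‖q'‖ ^ 2 / 2 + α * ‖xs - x‖ ^ 2 - ‖g x‖ ^ 2 / 2) ≤
      f xs + (‖q‖ ^ 2 / 2 + α * ‖xs - y‖ ^ 2 - ‖g y‖ ^ 2 / 2) := by
  have hpush : f x + ⟪q + g y, g x⟫ + α * ‖x - y‖ ^ 2 + 2 * α / 2 * ‖xs - x‖ ^ 2 ≤
      f xs + ⟪q + g y, g xs⟫ + α * ‖xs - y‖ ^ 2 :=
    ((hf.add (convexOn_inner_of_nonneg hf.1 hg hc)).strongConvexOn_add_mul_norm_sub_sq α y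
      ).add_norm_sub_sq_le_of_isMinOn hmin hx hxs
  have hfeas' : ⟪q + g y, g xs⟫ ≤ 0 := by
    rw [EuclideanSpace.real_inner_eq_sum]
    exact Finset.sum_nonpos fun k _ ↦ mul_nonpos_of_nonneg_of_nonpos (hc k) (hfeas k)
  have hcross : ⟪q + g y, g x⟫ =
      ⟪q + g x, g x⟫ - (‖g x - g y‖ ^ 2 + ‖g x‖ ^ 2 - ‖g y‖ ^ 2) / 2 := by
    rw [inner_add_left, inner_add_left, norm_sub_sq_real, real_inner_self_eq_norm_sq]
    linarith [real_inner_comm (g x) (g y)]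
  have hLip_sq : ‖g x - g y‖ ^ 2 ≤ 2 * α * ‖x - y‖ ^ 2 :=
    calc ‖g x - g y‖ ^ 2 ≤ (β * ‖x - y‖) ^ 2 := pow_le_pow_left₀ (norm_nonneg _) hLip 2
      _ ≤ 2 * α * ‖x - y‖ ^ 2 := by rw [mul_pow]; gcongr; linarith
  linarith [norm_sq_le_of_queue_update hq']

theorem Finset.sum_range_le_of_le_add_sub {a F : ℕ → ℝ} {c : ℝ}
    (h : ∀ t, a t ≤ c + (F t - F (t + 1))) (T : ℕ) :
    ∑ t ∈ range T, a t ≤ T * c + (F 0 - F T) := by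
  calc ∑ t ∈ range T, a t ≤ ∑ t ∈ range T, (c + (F t - F (t + 1))) := sum_le_sum fun t _ ↦ h t
    _ = T * c + (F 0 - F T) := by
      rw [sum_add_distrib, sum_const, sum_range_sub', card_range, nsmul_eq_mul]

theorem alg1_objective_sum_bound_general
    {n m : ℕ}
    (X : Set (EuclideanSpace ℝ (Fin n)))
    (f : EuclideanSpace ℝ (Fin n) → ℝ) (hf : ConvexOn ℝ X f)
    (g : EuclideanSpace ℝ (Fin n) → EuclideanSpace ℝ (Fin m))
    (hg : ∀ k : Fin m, ConvexOn ℝ X (fun z => g z k))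
    (β : ℝ) (hLip : ∀ u ∈ X, ∀ v ∈ X, ‖g u - g v‖ ≤ β * ‖u - v‖)
    (α : ℝ) (hα : β ^ 2 / 2 ≤ α)
    (x : ℤ → EuclideanSpace ℝ (Fin n)) (hxm1 : x (-1) ∈ X)
    (Q : ℕ → EuclideanSpace ℝ (Fin m))
    (hQ0 : ∀ k : Fin m, Q 0 k = max 0 (-(g (x (-1)) k)))
    (hxmem : ∀ t : ℕ, x t ∈ X)
    (hmin : ∀ t : ℕ, ∀ z ∈ X,
      f (x t) + ⟪Q t + g (x ((t : ℤ) - 1)), g (x t)⟫ + α * ‖x t - x ((t : ℤ) - 1)‖ ^ 2 ≤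
        f z + ⟪Q t + g (x ((t : ℤ) - 1)), g z⟫ + α * ‖z - x ((t : ℤ) - 1)‖ ^ 2)
    (hQrec : ∀ (t : ℕ) (k : Fin m),
      Q (t + 1) k = max (-(g (x t) k)) (Q t k + g (x t) k))
    (xs : EuclideanSpace ℝ (Fin n)) (hxs : xs ∈ X)
    (hfeas : ∀ k : Fin m, g xs k ≤ 0)
    :
    ∀ t : ℕ, 1 ≤ t → ∑ τ ∈ Finset.range t, f (x τ) ≤ (t : ℝ) * f xs + α * ‖xs - x (-1)‖ ^ 2 := by
  have hprev_succ (t : ℕ) : x (((t + 1 : ℕ) : ℤ) - 1) = x t := by push_cast; simp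
  have hprev_mem (t : ℕ) : x ((t : ℤ) - 1) ∈ X := by
    cases t with
    | zero => simpa using hxm1
    | succ t => simpa only [hprev_succ] using hxmem t
  have hQ_nonneg (t : ℕ) (k : Fin m) : 0 ≤ Q t k := by
    induction t generalizing k with
    | zero => exact hQ0 k ▸ le_max_left _ _
    | succ t ih => exact (abs_nonneg _).trans (abs_le_of_queue_update ih (hQrec t) k)
  have hc (t : ℕ) (k : Fin m) : 0 ≤ Q t k + g (x ((t : ℤ) - 1)) k := by
    cases t with
    | zero =>
      simp only [hQ0, Nat.cast_zero, zero_sub]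
      linarith [le_max_right 0 (-(g (x (-1)) k))]
    | succ t =>
      rw [hprev_succ, hQrec]
      linarith [le_max_left (-(g (x t) k)) (Q t k + g (x t) k)]
  set F : ℕ → ℝ := fun t ↦
    ‖Q t‖ ^ 2 / 2 + α * ‖xs - x ((t : ℤ) - 1)‖ ^ 2 - ‖g (x ((t : ℤ) - 1))‖ ^ 2 / 2
  have hstep (t : ℕ) : f (x t) ≤ f xs + (F t - F (t + 1)) := by
    have := drift_plus_penalty_step hf hg (hLip _ (hxmem t) _ (hprev_mem t)) hα (hc t)
      (isMinOn_iff.2 (hmin t)) (hxmem t) hxs hfeas (hQrec t)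
    simp only [F, hprev_succ]
    linarith
  have hF_zero : F 0 ≤ α * ‖xs - x (-1)‖ ^ 2 := by
    have := norm_le_norm_of_eq_max_zero_neg hQ0
    simp only [F, Nat.cast_zero, zero_sub]
    nlinarith [norm_nonneg (Q 0)]
  intro T hT
  have hF_nonneg : 0 ≤ F T := by
    obtain ⟨t, rfl⟩ := Nat.exists_eq_add_of_le' hT
    have := norm_le_norm_of_queue_update (hQ_nonneg t) (hQrec t)
    simp only [F, hprev_succ]
    have hα0 : 0 ≤ α := le_trans (by positivity) hα
    nlinarith [norm_nonneg (g (x t)), mul_nonneg hα0 (sq_nonneg ‖xs - x t‖)]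
  linarith [Finset.sum_range_le_of_le_add_sub hstep T]

theorem alg1_objective_sum_bound
    {n m : ℕ}
    (X : Set (EuclideanSpace ℝ (Fin n))) (hXconv : Convex ℝ X) (hXcl : IsClosed X)
    (f : EuclideanSpace ℝ (Fin n) → ℝ) (hf : ConvexOn ℝ X f) (hfc : ContinuousOn f X)
    (g : EuclideanSpace ℝ (Fin n) → EuclideanSpace ℝ (Fin m))
    (hg : ∀ k : Fin m, ConvexOn ℝ X (fun z => g z k))
    (β : ℝ) (hLip : ∀ u ∈ X, ∀ v ∈ X, ‖g u - g v‖ ≤ β * ‖u - v‖)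
    (α : ℝ) (hα : β ^ 2 / 2 ≤ α)
    (x : ℤ → EuclideanSpace ℝ (Fin n)) (hxm1 : x (-1) ∈ X)
    (Q : ℕ → EuclideanSpace ℝ (Fin m))
    (hQ0 : ∀ k : Fin m, Q 0 k = max 0 (-(g (x (-1)) k)))
    (hxmem : ∀ t : ℕ, x t ∈ X)
    (hmin : ∀ t : ℕ, ∀ z ∈ X,
      f (x t) + ⟪Q t + g (x ((t : ℤ) - 1)), g (x t)⟫ + α * ‖x t - x ((t : ℤ) - 1)‖ ^ 2 ≤
        f z + ⟪Q t + g (x ((t : ℤ) - 1)), g z⟫ + α * ‖z - x ((t : ℤ) - 1)‖ ^ 2)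
    (hQrec : ∀ (t : ℕ) (k : Fin m),
      Q (t + 1) k = max (-(g (x t) k)) (Q t k + g (x t) k))
    (xs : EuclideanSpace ℝ (Fin n)) (hxs : xs ∈ X)
    (hfeas : ∀ k : Fin m, g xs k ≤ 0)
    (hopt : ∀ z ∈ X, (∀ k : Fin m, g z k ≤ 0) → f xs ≤ f z)
    :
    ∀ t : ℕ, 1 ≤ t → ∑ τ ∈ Finset.range t, f (x τ) ≤ (t : ℝ) * f xs + α * ‖xs - x (-1)‖ ^ 2 :=
  alg1_objective_sum_bound_general X f hf g hg β hLip α hα x hxm1 Q hQ0 hxmem hmin hQrec xs hxs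
    hfeas
end

section
/- Consider Algorithm 1 applied to the convex program min{f(x) : g_k(x) ≤ 0 ∀k ∈ {1,…,m}, x ∈ 𝒳}. Let x* ∈ 𝒳 be an optimal solution and suppose λ* ∈ ℝᵐ is a Lagrange multiplier vector attaining strong duality: λ*_k ≥ 0 for all k, and f(x*) ≤ f(x) + ∑_{k=1}^m λ*_k g_k(x) for all x ∈ 𝒳. Then for all t ≥ 1, ∑_{τ=0}^{t−1} f(x(τ)) ≥ t·f(x*) − ‖λ*‖·‖Q(t)‖. -/
/-! Summing the strong-duality inequality `f x* ≤ f (x τ) + ∑ₖ λ*ₖ gₖ (x τ)` over `τ < t` leaves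
the accumulated constraint values `∑_{τ<t} gₖ (x τ)`. The queue update gives
`Qₖ(τ+1) ≥ Qₖ(τ) + gₖ (x τ)` and `Qₖ(0) ≥ 0`, so these sums telescope to at most `Qₖ(t)`; since
`λ* ≥ 0`, the remaining term is at most `⟪λ*, Q(t)⟫ ≤ ‖λ*‖ ‖Q(t)‖`. -/

open scoped RealInnerProductSpace

open Finset

theorem sum_range_le_of_add_le_succ (q c : ℕ → ℝ) (h0 : 0 ≤ q 0)
    (hstep : ∀ t, q t + c t ≤ q (t + 1)) (t : ℕ) :
    ∑ τ ∈ range t, c τ ≤ q t :=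
  calc ∑ τ ∈ range t, c τ ≤ ∑ τ ∈ range t, (q (τ + 1) - q τ) :=
        sum_le_sum fun τ _ => le_sub_iff_add_le'.mpr (hstep τ)
    _ = q t - q 0 := sum_range_sub q t
    _ ≤ q t := sub_le_self _ h0

theorem EuclideanSpace.sum_mul_le_norm_mul_norm {ι : Type*} [Fintype ι]
    (a b : EuclideanSpace ℝ ι) : ∑ k, a k * b k ≤ ‖a‖ * ‖b‖ := by
  have h := real_inner_le_norm a b
  simp only [PiLp.inner_apply, RCLike.inner_apply, conj_trivial] at h
  simpa only [mul_comm] using h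

theorem card_mul_sub_norm_mul_norm_le_sum {ι : Type*} [Fintype ι]
    (F : ℕ → ℝ) (G : ℕ → EuclideanSpace ℝ ι) (c : ℝ) (lam q : EuclideanSpace ℝ ι)
    (hlam : ∀ k, 0 ≤ lam k) (hdual : ∀ τ, c ≤ F τ + ∑ k, lam k * G τ k) (t : ℕ)
    (hq : ∀ k, ∑ τ ∈ range t, G τ k ≤ q k) :
    (t : ℝ) * c - ‖lam‖ * ‖q‖ ≤ ∑ τ ∈ range t, F τ := by
  have hsum : (t : ℝ) * c ≤ ∑ τ ∈ range t, F τ + ∑ k, lam k * q k :=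
    calc (t : ℝ) * c = ∑ _τ ∈ range t, c := by simp
      _ ≤ ∑ τ ∈ range t, (F τ + ∑ k, lam k * G τ k) := sum_le_sum fun τ _ => hdual τ
      _ = ∑ τ ∈ range t, F τ + ∑ k, lam k * ∑ τ ∈ range t, G τ k := by
          simp only [sum_add_distrib, mul_sum]
          rw [sum_comm]
      _ ≤ ∑ τ ∈ range t, F τ + ∑ k, lam k * q k := by
          gcongr with k
          exacts [hlam k, hq k]
  linarith [EuclideanSpace.sum_mul_le_norm_mul_norm lam q]

theorem alg1_objective_sum_lower_bound_general
    {n m : ℕ}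
    (X : Set (EuclideanSpace ℝ (Fin n)))
    (f : EuclideanSpace ℝ (Fin n) → ℝ)
    (g : EuclideanSpace ℝ (Fin n) → EuclideanSpace ℝ (Fin m))
    (x : ℤ → EuclideanSpace ℝ (Fin n))
    (Q : ℕ → EuclideanSpace ℝ (Fin m))
    (hQ0 : ∀ k : Fin m, Q 0 k = max 0 (-(g (x (-1)) k)))
    (hxmem : ∀ t : ℕ, x t ∈ X)
    (hQrec : ∀ (t : ℕ) (k : Fin m),
      Q (t + 1) k = max (-(g (x t) k)) (Q t k + g (x t) k))
    (xs : EuclideanSpace ℝ (Fin n))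
    (lam : EuclideanSpace ℝ (Fin m)) (hlam : ∀ k : Fin m, 0 ≤ lam k)
    (hsd : ∀ z ∈ X, f xs ≤ f z + ∑ k : Fin m, lam k * g z k)
    :
    ∀ t : ℕ, 1 ≤ t → (t : ℝ) * f xs - ‖lam‖ * ‖Q t‖ ≤ ∑ τ ∈ Finset.range t, f (x τ) := by
  intro t _
  have hqueue : ∀ k, ∑ τ ∈ range t, g (x τ) k ≤ Q t k := fun k =>
    sum_range_le_of_add_le_succ (fun s => Q s k) (fun s => g (x s) k)
      (by simp only [hQ0, le_max_left]) (fun s => by simp only [hQrec, le_max_right]) t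
  exact card_mul_sub_norm_mul_norm_le_sum (fun τ => f (x τ)) (fun τ => g (x τ)) (f xs) lam (Q t)
    hlam (fun τ => hsd _ (hxmem τ)) t hqueue

theorem alg1_objective_sum_lower_bound
    {n m : ℕ}
    (X : Set (EuclideanSpace ℝ (Fin n))) (hXconv : Convex ℝ X) (hXcl : IsClosed X)
    (f : EuclideanSpace ℝ (Fin n) → ℝ) (hf : ConvexOn ℝ X f) (hfc : ContinuousOn f X)
    (g : EuclideanSpace ℝ (Fin n) → EuclideanSpace ℝ (Fin m))
    (hg : ∀ k : Fin m, ConvexOn ℝ X (fun z => g z k))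
    (β : ℝ) (hLip : ∀ u ∈ X, ∀ v ∈ X, ‖g u - g v‖ ≤ β * ‖u - v‖)
    (α : ℝ) (hα : 0 < α)
    (x : ℤ → EuclideanSpace ℝ (Fin n)) (hxm1 : x (-1) ∈ X)
    (Q : ℕ → EuclideanSpace ℝ (Fin m))
    (hQ0 : ∀ k : Fin m, Q 0 k = max 0 (-(g (x (-1)) k)))
    (hxmem : ∀ t : ℕ, x t ∈ X)
    (hmin : ∀ t : ℕ, ∀ z ∈ X,
      f (x t) + ⟪Q t + g (x ((t : ℤ) - 1)), g (x t)⟫ + α * ‖x t - x ((t : ℤ) - 1)‖ ^ 2 ≤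
        f z + ⟪Q t + g (x ((t : ℤ) - 1)), g z⟫ + α * ‖z - x ((t : ℤ) - 1)‖ ^ 2)
    (hQrec : ∀ (t : ℕ) (k : Fin m),
      Q (t + 1) k = max (-(g (x t) k)) (Q t k + g (x t) k))
    (xs : EuclideanSpace ℝ (Fin n)) (hxs : xs ∈ X)
    (hfeas : ∀ k : Fin m, g xs k ≤ 0)
    (hopt : ∀ z ∈ X, (∀ k : Fin m, g z k ≤ 0) → f xs ≤ f z)
    (lam : EuclideanSpace ℝ (Fin m)) (hlam : ∀ k : Fin m, 0 ≤ lam k)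
    (hsd : ∀ z ∈ X, f xs ≤ f z + ∑ k : Fin m, lam k * g z k)
    :
    ∀ t : ℕ, 1 ≤ t → (t : ℝ) * f xs - ‖lam‖ * ‖Q t‖ ≤ ∑ τ ∈ Finset.range t, f (x τ) :=
  alg1_objective_sum_lower_bound_general X f g x Q hQ0 hxmem hQrec xs lam hlam hsd
end
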